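/- In any schedule of batches on a single machine (without idle-time advantage), if two batches of the same family both contain strictly fewer than N_j^b jobs, where any N_j^b jobs of the family fit within capacity, then moving a job from the later batch to the earlier batch yields a feasible schedule whose total weighted completion time is strictly smaller (assuming all weights are positive). -/

import Mathlib

/-- A batch: a family label together with the set of jobs loaded in it. -/
abbrev Batch (ι : Type*) (m : ℕ) := Fin m × Finset ι

/-- A schedule of batches (possibly empty batches allowed) on a single
parallel-batching machine: each batch contains only jobs of its family,
respects capacity, and every job is in exactly one batch. -/
structure BatchSchedule {ι : Type*} (m : ℕ) (fam : ι → Fin m) (v : ι → ℝ) (V : ℝ) where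
  batches : List (Batch ι m)
  mem_family : ∀ b ∈ batches, ∀ i ∈ b.2, fam i = b.1
  capacity : ∀ b ∈ batches, ∑ i ∈ b.2, v i ≤ V
  partition : ∀ i : ι, ∃! k : Fin batches.length, i ∈ (batches.get k).2

/-- Completion time of the `k`-th batch when batches are processed back to back
from time 0. -/
noncomputable def completionTime {ι : Type*} {m : ℕ} (q : Fin m → ℝ)
    (bs : List (Batch ι m)) (k : Fin bs.length) : ℝ :=
  ∑ l : Fin bs.length, if l.1 ≤ k.1 then q (bs.get l).1 else 0

/-- Total weighted completion time of the schedule. -/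
noncomputable def batchObj {ι : Type*} {m : ℕ} (q : Fin m → ℝ) (w : ι → ℝ)
    (bs : List (Batch ι m)) : ℝ :=
  ∑ k : Fin bs.length, (∑ i ∈ (bs.get k).2, w i) * completionTime q bs k


/-!
Completion times depend only on the family labels of the batches, and the move changes no label:
every job keeps its completion time except `i₀`, which now finishes with batch `k` instead of the
strictly later batch `k'`. Both modified batches hold at most `Nb` jobs of family `j`, hence fit
within capacity.
-/

section

variable {ι : Type*} {m : ℕ}

theorem completionTime_set_of_fst_eq (q : Fin m → ℝ) {bs : List (Batch ι m)} {l : ℕ}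
    {b : Batch ι m} (hl : l < bs.length) (hb : b.1 = bs[l].1) (c : Fin (bs.set l b).length) :
    completionTime q (bs.set l b) c = completionTime q bs (c.cast List.length_set) := by
  refine Fintype.sum_equiv (finCongr List.length_set) _ _ fun n => ?_
  have hfst : ((bs.set l b)[n.1]).1 = bs[n.1].1 := by
    rw [List.getElem_set]
    split_ifs with h
    · simpa only [← h] using hb
    · rfl
  simp [hfst]

theorem batchObj_set_of_fst_eq (q : Fin m → ℝ) (w : ι → ℝ) {bs : List (Batch ι m)} {l : ℕ}
    {b : Batch ι m} (hl : l < bs.length) (hb : b.1 = bs[l].1) :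
    batchObj q w (bs.set l b) = batchObj q w bs +
      (∑ i ∈ b.2, w i - ∑ i ∈ bs[l].2, w i) * completionTime q bs ⟨l, hl⟩ := by
  calc batchObj q w (bs.set l b)
      = ∑ c : Fin bs.length, ((∑ i ∈ bs[c.1].2, w i) * completionTime q bs c +
          if (⟨l, hl⟩ : Fin bs.length) = c then
            (∑ i ∈ b.2, w i - ∑ i ∈ bs[l].2, w i) * completionTime q bs c else 0) := by
        refine Fintype.sum_equiv (finCongr List.length_set) _ _ fun c => ?_
        rw [completionTime_set_of_fst_eq q hl hb]
        simp only [List.get_eq_getElem, List.getElem_set, Fin.ext_iff, finCongr_apply,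
          Fin.val_cast]
        split_ifs with h
        · simp only [← h]; ring
        · ring
    _ = _ := by
        rw [Finset.sum_add_distrib, Finset.sum_ite_eq]
        simp [batchObj]

theorem batchObj_move (q : Fin m → ℝ) (w : ι → ℝ) [DecidableEq ι] {bs : List (Batch ι m)}
    {k k' : ℕ} (hk : k < bs.length) (hk' : k' < bs.length) (hne : k ≠ k') {a a' : Fin m}
    (ha : bs[k].1 = a) (ha' : bs[k'].1 = a') {i₀ : ι} (hi₀k : i₀ ∉ bs[k].2)
    (hi₀k' : i₀ ∈ bs[k'].2) :
    batchObj q w ((bs.set k' (a', bs[k'].2.erase i₀)).set k (a, insert i₀ bs[k].2)) =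
      batchObj q w bs +
        w i₀ * (completionTime q bs ⟨k, hk⟩ - completionTime q bs ⟨k', hk'⟩) := by
  have hk₁ : k < (bs.set k' (a', bs[k'].2.erase i₀)).length := by simpa using hk
  have hget : (bs.set k' (a', bs[k'].2.erase i₀))[k] = bs[k] := List.getElem_set_ne hne.symm _
  rw [batchObj_set_of_fst_eq q w hk₁ (by rw [hget, ha]),
    batchObj_set_of_fst_eq q w hk' ha'.symm, completionTime_set_of_fst_eq q hk' ha'.symm, hget,
    Finset.sum_insert hi₀k, Finset.sum_erase_eq_sub hi₀k']
  simp only [Fin.cast_mk]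
  ring

theorem mem_move_iff [DecidableEq ι] {bs : List (Batch ι m)} {k k' : ℕ} (hk : k < bs.length)
    (hk' : k' < bs.length) {i₀ : ι}
    (hi₀_unique : ∀ n (hn : n < bs.length), i₀ ∈ bs[n].2 → n = k') (a a' : Fin m) (i : ι)
    {n : ℕ} (hn : n < bs.length) :
    i ∈ (((bs.set k' (a', bs[k'].2.erase i₀)).set k (a, insert i₀ bs[k].2))[n]'(by simpa)).2 ↔
      if i = i₀ then n = k else i ∈ bs[n].2 := by
  simp only [List.getElem_set]
  split_ifs <;> grind

theorem existsUnique_mem_move [DecidableEq ι] {bs : List (Batch ι m)}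
    (hpart : ∀ i, ∃! c : Fin bs.length, i ∈ (bs.get c).2) {k k' : ℕ} (hk : k < bs.length)
    (hk' : k' < bs.length) {i₀ : ι} (hi₀ : i₀ ∈ bs[k'].2) (a a' : Fin m) (i : ι) :
    ∃! c : Fin ((bs.set k' (a', bs[k'].2.erase i₀)).set k (a, insert i₀ bs[k].2)).length,
      i ∈ (((bs.set k' (a', bs[k'].2.erase i₀)).set k (a, insert i₀ bs[k].2)).get c).2 := by
  have hi₀_unique (n : ℕ) (hn : n < bs.length) (h : i₀ ∈ bs[n].2) : n = k' := by
    obtain ⟨c, -, hc⟩ := hpart i₀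
    exact congrArg Fin.val ((hc ⟨n, hn⟩ h).trans (hc ⟨k', hk'⟩ hi₀).symm)
  have hmem (c : Fin bs.length) := mem_move_iff hk hk' hi₀_unique a a' i c.2
  refine ((finCongr (by simp)).existsUnique_congr fun c => ?_).1 (?_ : ∃! c : Fin bs.length,
    if i = i₀ then c.1 = k else i ∈ (bs.get c).2)
  · simpa using (hmem c).symm
  · split_ifs with hi
    · exact ⟨⟨k, hk⟩, rfl, fun c hc => Fin.ext hc⟩
    · exact hpart i

theorem BatchSchedule.exists_batches_eq_move [DecidableEq ι] {fam : ι → Fin m} {v : ι → ℝ}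
    {V : ℝ} (σ : BatchSchedule m fam v V) {k k' : ℕ} (hk : k < σ.batches.length)
    (hk' : k' < σ.batches.length) {i₀ : ι} (hi₀ : i₀ ∈ σ.batches[k'].2) {a a' : Fin m}
    (hfam : ∀ i ∈ insert i₀ σ.batches[k].2, fam i = a)
    (hfam' : ∀ i ∈ σ.batches[k'].2.erase i₀, fam i = a')
    (hcap : ∑ i ∈ insert i₀ σ.batches[k].2, v i ≤ V)
    (hcap' : ∑ i ∈ σ.batches[k'].2.erase i₀, v i ≤ V) :
    ∃ σ' : BatchSchedule m fam v V, σ'.batches =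
      (σ.batches.set k' (a', σ.batches[k'].2.erase i₀)).set k (a, insert i₀ σ.batches[k].2) := by
  have hcases (b) (hb : b ∈ (σ.batches.set k' (a', σ.batches[k'].2.erase i₀)).set k
      (a, insert i₀ σ.batches[k].2)) :
      b ∈ σ.batches ∨ b = (a', σ.batches[k'].2.erase i₀) ∨ b = (a, insert i₀ σ.batches[k].2) := by
    rcases List.mem_or_eq_of_mem_set hb with hb | hb
    · exact (List.mem_or_eq_of_mem_set hb).imp_right Or.inl
    · exact Or.inr (Or.inr hb)
  refine ⟨⟨_, fun b hb => ?_, fun b hb => ?_,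
    existsUnique_mem_move σ.partition hk hk' hi₀ a a'⟩, rfl⟩
  · rcases hcases b hb with hb | rfl | rfl
    exacts [σ.mem_family b hb, hfam', hfam]
  · rcases hcases b hb with hb | rfl | rfl
    exacts [σ.capacity b hb, hcap', hcap]

end

/-- If two batches `k, k'` of the same family `j` both contain
strictly fewer than `Nb j` jobs, where any `Nb j` jobs of family `j` fit within
capacity, and batch `k` completes earlier than batch `k'`, then moving a job `i₀`
from the later batch `k'` to the earlier batch `k` yields a feasible schedule
whose total weighted completion time is strictly smaller (all weights positive). -/
theorem move_job_to_earlier_batch_strictly_improves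
    {ι : Type*} [DecidableEq ι] {m : ℕ}
    (fam : ι → Fin m) (v w : ι → ℝ) (V : ℝ) (q : Fin m → ℝ)
    (hw : ∀ i, 0 < w i)
    (σ : BatchSchedule m fam v V) (j : Fin m)
    (Nb : ℕ)
    (hNb : ∀ S : Finset ι, (∀ i ∈ S, fam i = j) → S.card ≤ Nb → ∑ i ∈ S, v i ≤ V)
    (k k' : Fin σ.batches.length)
    (hkj : (σ.batches.get k).1 = j) (hk'j : (σ.batches.get k').1 = j)
    (hkcard : (σ.batches.get k).2.card < Nb)
    (hk'card : (σ.batches.get k').2.card < Nb)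
    (hearlier : completionTime q σ.batches k < completionTime q σ.batches k')
    (i₀ : ι) (hi₀ : i₀ ∈ (σ.batches.get k').2) :
    ∃ σ' : BatchSchedule m fam v V,
      σ'.batches =
        ((σ.batches.set k'.1 (j, (σ.batches.get k').2.erase i₀)).set k.1
          (j, insert i₀ (σ.batches.get k).2)) ∧
      batchObj q w σ'.batches < batchObj q w σ.batches := by
  simp only [List.get_eq_getElem] at *
  have hne : k ≠ k' := by rintro rfl; exact hearlier.false
  have hfam (c : Fin σ.batches.length) (hc : σ.batches[c.1].1 = j) :
      ∀ i ∈ σ.batches[c.1].2, fam i = j :=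
    fun i hi => hc ▸ σ.mem_family _ (List.getElem_mem _) i hi
  have hi₀k : i₀ ∉ σ.batches[k.1].2 := fun hi₀k =>
    hne ((σ.partition i₀).unique (y₁ := k) (y₂ := k') hi₀k hi₀)
  have hfam_ins : ∀ i ∈ insert i₀ σ.batches[k.1].2, fam i = j :=
    Finset.forall_mem_insert .. |>.2 ⟨hfam k' hk'j i₀ hi₀, hfam k hkj⟩
  have hfam_erase : ∀ i ∈ σ.batches[k'.1].2.erase i₀, fam i = j :=
    fun i hi => hfam k' hk'j i (Finset.mem_of_mem_erase hi)
  obtain ⟨σ', hσ'⟩ := σ.exists_batches_eq_move k.2 k'.2 hi₀ hfam_ins hfam_erase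
    (hNb _ hfam_ins ((Finset.card_insert_le _ _).trans hkcard))
    (hNb _ hfam_erase (Finset.card_erase_le.trans hk'card.le))
  refine ⟨σ', hσ', ?_⟩
  rw [hσ', batchObj_move q w k.2 k'.2 (Fin.val_ne_of_ne hne) hkj hk'j hi₀k hi₀]
  linarith [mul_neg_of_pos_of_neg (hw i₀) (sub_neg.2 hearlier)]
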